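/- arXiv:2106.09549 — 4 statements merged into one kernel-verified Lean document; each statement's English description precedes it below -/
import Mathlib

section
/- Define G(x,m) := ∫₀ˣ (1 − 2m sin²θ)(1 − m sin²θ)^{−1/2} dθ for x ∈ ℝ and m ∈ (0,1). If 0 < m < m_T, then for every x ∈ ℝ, G(x,m) = 0 implies x = 0. -/
open Real MeasureTheory Set

noncomputable section

/-- Incomplete elliptic integral of the first kind `F(x,m)`. -/
def Fell (x m : ℝ) : ℝ := ∫ θ in (0:ℝ)..x, 1 / Real.sqrt (1 - m * Real.sin θ ^ 2)

/-- Incomplete elliptic integral of the second kind `E(x,m)`. -/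
def Eell (x m : ℝ) : ℝ := ∫ θ in (0:ℝ)..x, Real.sqrt (1 - m * Real.sin θ ^ 2)

/-- Complete elliptic integral of the first kind `K(m)`. -/
def Kc (m : ℝ) : ℝ := Fell (Real.pi / 2) m

/-- Complete elliptic integral of the second kind `E(m)`. -/
def Ec (m : ℝ) : ℝ := Eell (Real.pi / 2) m

/-- `α(m) = arcsin √(1/(2m))`. -/
def alph (m : ℝ) : ℝ := Real.arcsin (Real.sqrt (1 / (2 * m)))

/-- `G(x,m) = ∫₀ˣ (1 − 2m sin²θ)(1 − m sin²θ)^{−1/2} dθ = 2E(x,m) − F(x,m)`. -/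
def Gw (x m : ℝ) : ℝ :=
  ∫ θ in (0:ℝ)..x, (1 - 2 * m * Real.sin θ ^ 2) / Real.sqrt (1 - m * Real.sin θ ^ 2)

/-- `f(m) = ∫₀^{π−α(m)} (1 − 2m sin²θ)(1 − m sin²θ)^{−1/2} dθ`; its unique zero is `m_T`. -/
def fT (m : ℝ) : ℝ := Gw (Real.pi - alph m) m

/- ### Auxiliary definitions and lemmas -/

/-- The integrand of `Gw`. -/
def gI (m θ : ℝ) : ℝ :=
  (1 - 2 * m * Real.sin θ ^ 2) / Real.sqrt (1 - m * Real.sin θ ^ 2)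

lemma Gw_eq (x m : ℝ) : Gw x m = ∫ θ in (0:ℝ)..x, gI m θ := rfl

/-- The function `u ↦ (1-2u)/√(1-u)` is strictly decreasing on `[0,1)`. -/
lemma hfun_mono {u v : ℝ} (hu : 0 ≤ u) (huv : u < v) (hv1 : v < 1) :
    (1 - 2*v) / Real.sqrt (1 - v) < (1 - 2*u) / Real.sqrt (1 - u) := by
  have hu1 : u < 1 := huv.trans hv1
  set s := Real.sqrt (1 - u) with hs
  set t := Real.sqrt (1 - v) with htdef
  have ht : 0 < t := Real.sqrt_pos.2 (by linarith)
  have hst : t < s := by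
    apply Real.sqrt_lt_sqrt (by linarith) (by linarith)
  have hs0 : 0 < s := ht.trans hst
  have ht2 : t ^ 2 = 1 - v := Real.sq_sqrt (by linarith)
  have hs2 : s ^ 2 = 1 - u := Real.sq_sqrt (by linarith)
  rw [div_lt_div_iff₀ ht hs0]
  nlinarith [mul_pos ht hs0, mul_pos (mul_pos ht hs0) (sub_pos.2 hst)]

lemma S_pos {m θ : ℝ} (hm : m * Real.sin θ ^ 2 < 1) : 0 < 1 - m * Real.sin θ ^ 2 := by
  linarith

lemma msin_lt_one {m θ : ℝ} (hm0 : 0 ≤ m) (hm1 : m < 1) : m * Real.sin θ ^ 2 < 1 := by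
  nlinarith [Real.sin_sq_le_one θ, sq_nonneg (Real.sin θ)]

lemma gI_cont {m : ℝ} (hm0 : 0 ≤ m) (hm1 : m < 1) : Continuous (gI m) := by
  apply Continuous.div
  · continuity
  · continuity
  · intro θ
    exact ne_of_gt (Real.sqrt_pos.2 (S_pos (msin_lt_one hm0 hm1)))

lemma gI_intInt {m : ℝ} (hm0 : 0 ≤ m) (hm1 : m < 1) (a b : ℝ) :
    IntervalIntegrable (gI m) volume a b :=
  (gI_cont hm0 hm1).intervalIntegrable a b

lemma gI_pos {m θ : ℝ} (h : m * Real.sin θ ^ 2 < 1/2) : 0 < gI m θ := by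
  have h1 : (0:ℝ) < 1 - m * Real.sin θ ^ 2 := by linarith
  exact div_pos (by linarith [h]) (Real.sqrt_pos.2 h1)

lemma gI_nonneg {m θ : ℝ} (h : m * Real.sin θ ^ 2 ≤ 1/2) : 0 ≤ gI m θ :=
  div_nonneg (by linarith) (Real.sqrt_nonneg _)

lemma gI_nonpos {m θ : ℝ} (h : 1/2 ≤ m * Real.sin θ ^ 2) : gI m θ ≤ 0 :=
  div_nonpos_of_nonpos_of_nonneg (by linarith) (Real.sqrt_nonneg _)

/-- Pointwise strict monotonicity of the integrand in `m`. -/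
lemma gI_strict_anti {m₁ m₂ θ : ℝ} (h1 : 0 < m₁) (h12 : m₁ < m₂) (h2 : m₂ < 1)
    (hθ : Real.sin θ ≠ 0) : gI m₂ θ < gI m₁ θ := by
  have hs : 0 < Real.sin θ ^ 2 := by positivity
  have hle : Real.sin θ ^ 2 ≤ 1 := Real.sin_sq_le_one θ
  have := hfun_mono (u := m₁ * Real.sin θ ^ 2) (v := m₂ * Real.sin θ ^ 2)
    (by positivity) (by nlinarith) (by nlinarith)
  simpa [gI, mul_assoc] using this

/- alph facts -/

lemma alph_pos {m : ℝ} (hm : 0 < m) : 0 < alph m :=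
  Real.arcsin_pos.2 (Real.sqrt_pos.2 (by positivity))

lemma alph_le {m : ℝ} : alph m ≤ Real.pi / 2 := Real.arcsin_le_pi_div_two _

lemma alph_anti {m m' : ℝ} (hm : 0 < m) (hmm' : m ≤ m') : alph m' ≤ alph m := by
  apply Real.monotone_arcsin
  apply Real.sqrt_le_sqrt
  apply one_div_le_one_div_of_le (by linarith)
  linarith

lemma msin_alph_le {m : ℝ} (hm : 0 < m) : m * Real.sin (alph m) ^ 2 ≤ 1/2 := by
  set c := Real.sqrt (1 / (2 * m)) with hc
  have hc0 : 0 ≤ c := Real.sqrt_nonneg _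
  by_cases hc1 : c ≤ 1
  · have hsin : Real.sin (alph m) = c := Real.sin_arcsin (by linarith) hc1
    have hc2 : c ^ 2 = 1 / (2 * m) := Real.sq_sqrt (by positivity)
    rw [hsin, hc2, mul_one_div, div_le_iff₀ (by positivity)]
    linarith
  · -- c > 1, so 1/(2m) > 1, so m < 1/2
    push_neg at hc1
    have hc2 : c ^ 2 = 1 / (2 * m) := Real.sq_sqrt (by positivity)
    have h2 : (1:ℝ) < 1 / (2 * m) := by nlinarith
    have hm12 : m < 1/2 := by
      rw [lt_div_iff₀ (by positivity)] at h2
      linarith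
    nlinarith [Real.sin_sq_le_one (alph m), sq_nonneg (Real.sin (alph m))]

lemma sin_alph_eq {m : ℝ} (hm : 1/2 < m) : Real.sin (alph m) = Real.sqrt (1 / (2 * m)) := by
  apply Real.sin_arcsin (by linarith [Real.sqrt_nonneg (1 / (2*m))])
  rw [Real.sqrt_le_one, div_le_one (by linarith)]
  linarith

lemma msin_alph_eq {m : ℝ} (hm : 1/2 < m) : m * Real.sin (alph m) ^ 2 = 1/2 := by
  rw [sin_alph_eq hm, Real.sq_sqrt (by positivity)]
  field_simp

/- sin comparison lemmas -/

lemma neg_pi_div_two_le_alph (m : ℝ) : -(Real.pi/2) ≤ alph m :=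
  Real.neg_pi_div_two_le_arcsin _

lemma sin_lt_of_lt_alph {m θ : ℝ} (hθ0 : 0 ≤ θ) (hθ : θ < alph m) :
    Real.sin θ < Real.sin (alph m) := by
  apply Real.strictMonoOn_sin ⟨by linarith [Real.pi_pos], le_of_lt (hθ.trans_le alph_le)⟩
    ⟨neg_pi_div_two_le_alph m, alph_le⟩ hθ

lemma sin_ge_of_mem_mid {m θ : ℝ} (hθ1 : alph m ≤ θ) (hθ2 : θ ≤ Real.pi - alph m) :
    Real.sin (alph m) ≤ Real.sin θ := by
  have hα2 : alph m ≤ Real.pi / 2 := alph_le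
  have hge := neg_pi_div_two_le_alph m
  rcases le_or_gt θ (Real.pi / 2) with h | h
  · apply Real.strictMonoOn_sin.monotoneOn ⟨hge, hα2⟩ ⟨by linarith, h⟩ hθ1
  · rw [← Real.sin_pi_sub θ]
    apply Real.strictMonoOn_sin.monotoneOn ⟨hge, hα2⟩
      ⟨by linarith, by linarith⟩ (by linarith)

lemma sin_le_of_mem_right {m θ : ℝ} (hθ1 : Real.pi - alph m ≤ θ) (hθ2 : θ ≤ Real.pi) :
    Real.sin θ ≤ Real.sin (alph m) := by
  have hα2 : alph m ≤ Real.pi / 2 := alph_le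
  have hge := neg_pi_div_two_le_alph m
  rw [← Real.sin_pi_sub θ]
  apply Real.strictMonoOn_sin.monotoneOn
    ⟨by linarith [Real.pi_pos], by linarith⟩ ⟨hge, hα2⟩ (by linarith)

/- Gw decompositions -/

lemma Gw_sub {m : ℝ} (hm0 : 0 ≤ m) (hm1 : m < 1) (a b : ℝ) :
    Gw b m - Gw a m = ∫ θ in a..b, gI m θ := by
  rw [Gw_eq, Gw_eq]
  exact intervalIntegral.integral_interval_sub_left (gI_intInt hm0 hm1 0 b)
    (gI_intInt hm0 hm1 0 a)

lemma gI_periodic (m : ℝ) : Function.Periodic (gI m) Real.pi := by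
  intro θ
  simp [gI, Real.sin_add_pi, neg_sq]

lemma Gw_add_pi {m : ℝ} (hm0 : 0 ≤ m) (hm1 : m < 1) (x : ℝ) :
    Gw (x + Real.pi) m = Gw x m + Gw Real.pi m := by
  have h1 : Gw (x + Real.pi) m - Gw Real.pi m = ∫ θ in Real.pi..(x + Real.pi), gI m θ :=
    Gw_sub hm0 hm1 _ _
  have h2 : (∫ θ in (0:ℝ)..x, gI m (θ + Real.pi)) = ∫ θ in Real.pi..(x + Real.pi), gI m θ := by
    rw [intervalIntegral.integral_comp_add_right (fun θ => gI m θ) Real.pi]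
    norm_num
  have h3 : (∫ θ in (0:ℝ)..x, gI m (θ + Real.pi)) = Gw x m := by
    rw [Gw_eq]
    apply intervalIntegral.integral_congr
    intro θ _
    exact gI_periodic m θ
  linarith

lemma Gw_neg (m x : ℝ) : Gw (-x) m = - Gw x m := by
  rw [Gw_eq, Gw_eq]
  have h : (∫ θ in (0:ℝ)..x, gI m (-θ)) = ∫ θ in (-x)..(0:ℝ), gI m θ := by
    simpa using intervalIntegral.integral_comp_neg (a := (0:ℝ)) (b := x) (fun θ => gI m θ)
  have heven : ∀ θ : ℝ, gI m (-θ) = gI m θ := by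
    intro θ; simp [gI, Real.sin_neg, neg_sq]
  rw [intervalIntegral.integral_symm, ← h, neg_inj]
  apply intervalIntegral.integral_congr
  intro θ _
  exact heven θ

lemma intInt_nonpos {f : ℝ → ℝ} {a b : ℝ} (hab : a ≤ b)
    (h : ∀ u ∈ Icc a b, f u ≤ 0) : (∫ u in a..b, f u) ≤ 0 := by
  have h2 := intervalIntegral.integral_nonneg (f := fun u => -f u) (μ := volume) hab
    (fun u hu => by simpa using h u hu)
  rw [intervalIntegral.integral_neg] at h2
  linarith

/-- Key monotonicity: `fT m > fT m'` for `0 < m < m' < 1`, `m' > 1/2`. -/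
lemma fT_gt {m m' : ℝ} (hm0 : 0 < m) (hmm' : m < m') (hm'12 : 1/2 < m') (hm'1 : m' < 1) :
    fT m' < fT m := by
  set β1 := Real.pi - alph m with hβ1
  set β2 := Real.pi - alph m' with hβ2
  have hm1 : m < 1 := hmm'.trans hm'1
  have hβ12 : β1 ≤ β2 := by
    have := alph_anti hm0 hmm'.le
    simp only [hβ1, hβ2]; linarith
  have hβ1pos : 0 < β1 := by
    have := alph_le (m := m); have := Real.pi_pos
    simp only [hβ1]; linarith
  have hβ1pi : β1 < Real.pi := by
    have := alph_pos hm0; simp only [hβ1]; linarith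
  -- fT m - fT m' = ∫₀^β1 (g m - g m') - ∫_{β1}^{β2} g m'
  have hdecomp : fT m - fT m' =
      (∫ θ in (0:ℝ)..β1, (gI m θ - gI m' θ)) - ∫ θ in β1..β2, gI m' θ := by
    have e1 : (∫ θ in (0:ℝ)..β1, gI m' θ) + (∫ θ in β1..β2, gI m' θ)
        = ∫ θ in (0:ℝ)..β2, gI m' θ :=
      intervalIntegral.integral_add_adjacent_intervals
        (gI_intInt (le_of_lt (by linarith : (0:ℝ) < m')) hm'1 0 β1)
        (gI_intInt (by linarith) hm'1 β1 β2)
    have e2 : (∫ θ in (0:ℝ)..β1, (gI m θ - gI m' θ))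
        = (∫ θ in (0:ℝ)..β1, gI m θ) - ∫ θ in (0:ℝ)..β1, gI m' θ :=
      intervalIntegral.integral_sub (gI_intInt hm0.le hm1 0 β1)
        (gI_intInt (by linarith) hm'1 0 β1)
    simp only [fT, Gw_eq, ← hβ1, ← hβ2]
    rw [e2, ← e1]
    ring
  have h1 : 0 < ∫ θ in (0:ℝ)..β1, (gI m θ - gI m' θ) := by
    apply intervalIntegral.intervalIntegral_pos_of_pos_on
    · exact ((gI_cont hm0.le hm1).sub (gI_cont (by linarith) hm'1)).intervalIntegrable _ _
    · intro θ hθ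
      have hsin : Real.sin θ ≠ 0 := by
        have : 0 < Real.sin θ :=
          Real.sin_pos_of_pos_of_lt_pi hθ.1 (hθ.2.trans hβ1pi)
        linarith
      linarith [gI_strict_anti hm0 hmm' hm'1 hsin]
    · exact hβ1pos
  have h2 : (∫ θ in β1..β2, gI m' θ) ≤ 0 := by
    apply intInt_nonpos hβ12
    intro θ hθ
    apply gI_nonpos
    have hθ1 : alph m' ≤ θ := by
      have h1 : alph m' ≤ Real.pi / 2 := alph_le
      have h2 : Real.pi / 2 ≤ β1 := by
        have := alph_le (m := m); simp only [hβ1]; linarith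
      linarith [hθ.1]
    have hθ2 : θ ≤ Real.pi - alph m' := hθ.2
    have hsge := sin_ge_of_mem_mid hθ1 hθ2
    have heq := msin_alph_eq hm'12
    have hsnn : 0 ≤ Real.sin (alph m') := by
      apply Real.sin_nonneg_of_nonneg_of_le_pi (alph_pos (by linarith)).le
      linarith [alph_le (m := m'), Real.pi_pos]
    have hkey : 0 ≤ (Real.sin θ - Real.sin (alph m')) * (Real.sin θ + Real.sin (alph m')) :=
      mul_nonneg (by linarith) (by linarith)
    nlinarith [hkey]
  linarith [hdecomp]

/-- A name for `intervalIntegral.integral_nonpos`, in case it's elsewhere; via nonneg of neg. -/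
lemma Gw_pos_of_period {m : ℝ} (hm0 : 0 < m) (hm1 : m < 1) (hf : 0 < fT m)
    {x : ℝ} (hx0 : 0 < x) (hxpi : x ≤ Real.pi) : 0 < Gw x m := by
  set α := alph m with hα
  set β := Real.pi - α with hβ
  have hα0 : 0 < α := alph_pos hm0
  have hα2 : α ≤ Real.pi / 2 := alph_le
  have hβ2 : Real.pi / 2 ≤ β := by simp only [hβ]; linarith
  have hβpi : β < Real.pi := by simp only [hβ]; linarith
  rcases le_or_gt x α with hxa | hxa
  · -- 0 < x ≤ α : integrand positive on (0,x)
    rw [Gw_eq]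
    apply intervalIntegral.intervalIntegral_pos_of_pos_on (gI_intInt hm0.le hm1 0 x)
    · intro θ hθ
      apply gI_pos
      have hθα : θ < α := hθ.2.trans_le hxa
      have hslt := sin_lt_of_lt_alph hθ.1.le hθα
      have hsnn : 0 ≤ Real.sin θ := by
        apply Real.sin_nonneg_of_nonneg_of_le_pi hθ.1.le
        linarith [Real.pi_pos]
      have hle := msin_alph_le hm0
      have hsa : 0 < Real.sin α := by
        simp only [hα]; linarith [hslt, hsnn]
      have hkey : 0 < (Real.sin α - Real.sin θ) * (Real.sin α + Real.sin θ) :=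
        mul_pos (by simp only [hα] at *; linarith) (by linarith)
      nlinarith [hkey]
    · exact hx0
  rcases le_or_gt x β with hxb | hxb
  · -- α < x ≤ β : Gw x ≥ Gw β = fT m > 0
    have hαβ : α < β := hxa.trans_le hxb
    have hαlt : α < Real.pi / 2 := by simp only [hβ] at hαβ; linarith
    have hm12 : 1/2 < m := by
      by_contra h
      push_neg at h
      have hc : (1:ℝ) ≤ Real.sqrt (1 / (2 * m)) := by
        have h1 : (1:ℝ) ≤ 1 / (2*m) := by rw [le_div_iff₀ (by positivity)]; linarith
        have h2 := Real.sqrt_le_sqrt h1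
        simpa using h2
      have : α = Real.pi / 2 := Real.arcsin_eq_pi_div_two.2 hc
      linarith
    have hkey : fT m ≤ Gw x m := by
      have hsub : Gw β m - Gw x m = ∫ θ in x..β, gI m θ := Gw_sub hm0.le hm1 x β
      have hint : (∫ θ in x..β, gI m θ) ≤ 0 := by
        apply intInt_nonpos hxb
        intro θ hθ
        apply gI_nonpos
        have hθ1 : α ≤ θ := le_of_lt (hxa.trans_le hθ.1)
        have hθ2 : θ ≤ β := hθ.2
        have hsge := sin_ge_of_mem_mid hθ1 hθ2
        have heq := msin_alph_eq hm12
        have hsnn : 0 ≤ Real.sin α := by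
          apply Real.sin_nonneg_of_nonneg_of_le_pi hα0.le
          linarith [Real.pi_pos]
        have hkey : 0 ≤ (Real.sin θ - Real.sin α) * (Real.sin θ + Real.sin α) :=
          mul_nonneg (by simp only [hα] at *; linarith) (by simp only [hα] at *; linarith)
        nlinarith [hkey]
      have : fT m = Gw β m := rfl
      linarith
    linarith
  · -- β < x ≤ π : Gw x ≥ Gw β = fT m > 0
    have hsub : Gw x m - Gw β m = ∫ θ in β..x, gI m θ := Gw_sub hm0.le hm1 β x
    have hint : 0 ≤ ∫ θ in β..x, gI m θ := by
      apply intervalIntegral.integral_nonneg hxb.le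
      intro θ hθ
      apply gI_nonneg
      have hsle := sin_le_of_mem_right (m := m)
        (by simp only [← hα, ← hβ]; exact hθ.1) (hθ.2.trans hxpi)
      have hsnn : 0 ≤ Real.sin θ := by
        apply Real.sin_nonneg_of_nonneg_of_le_pi (by linarith [hθ.1, hβ2, Real.pi_pos])
        exact hθ.2.trans hxpi
      have hle := msin_alph_le hm0
      have hkey : 0 ≤ (Real.sin α - Real.sin θ) * (Real.sin α + Real.sin θ) :=
        mul_nonneg (by simp only [hα] at *; linarith) (by simp only [hα] at *; linarith)
      nlinarith [hkey]
    have : fT m = Gw β m := rfl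
    linarith

lemma Gw_pos_all {m : ℝ} (hm0 : 0 < m) (hm1 : m < 1) (hf : 0 < fT m)
    {x : ℝ} (hx0 : 0 < x) : 0 < Gw x m := by
  have hπ : 0 < Real.pi := Real.pi_pos
  have hGπ : 0 < Gw Real.pi m := Gw_pos_of_period hm0 hm1 hf hπ le_rfl
  have key : ∀ n : ℕ, ∀ y : ℝ, 0 < y → y ≤ ((n : ℝ) + 1) * Real.pi → 0 < Gw y m := by
    intro n
    induction n with
    | zero =>
      intro y hy0 hyle
      norm_num at hyle
      exact Gw_pos_of_period hm0 hm1 hf hy0 hyle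
    | succ n ih =>
      intro y hy0 hyle
      push_cast at hyle
      rcases le_or_gt y (((n : ℝ) + 1) * Real.pi) with h | h
      · exact ih y hy0 h
      · have hn0 : (0:ℝ) ≤ (n : ℝ) := Nat.cast_nonneg n
        have hy' : 0 < y - Real.pi := by nlinarith
        have hy'' : y - Real.pi ≤ ((n : ℝ) + 1) * Real.pi := by nlinarith
        have hrec := ih (y - Real.pi) hy' hy''
        have heq : Gw y m = Gw (y - Real.pi) m + Gw Real.pi m := by
          have h' := Gw_add_pi hm0.le hm1 (y - Real.pi)
          simpa using h'
        linarith
  obtain ⟨n, hn⟩ := exists_nat_ge (x / Real.pi)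
  apply key n x hx0
  have hx' : x ≤ (n : ℝ) * Real.pi := by
    rw [div_le_iff₀ hπ] at hn
    linarith
  nlinarith

/-- Lemma 2.9 (iv): for `0 < m < m_T`, the only zero of `G(·, m)` is `x = 0`. -/
theorem stmt7 (mT : ℝ) (hmT : mT ∈ Set.Ioo (1/2 : ℝ) 1) (hmTzero : fT mT = 0)
    (m : ℝ) (hm0 : 0 < m) (hmT' : m < mT) :
    ∀ x : ℝ, Gw x m = 0 → x = 0 := by
  intro x hx
  have hm1 : m < 1 := hmT'.trans hmT.2
  have hf : 0 < fT m := by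
    have := fT_gt hm0 hmT' hmT.1 hmT.2
    linarith [hmTzero]
  rcases lt_trichotomy x 0 with h | h | h
  · exfalso
    have hpos : 0 < Gw (-x) m := Gw_pos_all hm0 hm1 hf (by linarith)
    rw [Gw_neg] at hpos
    linarith [hx ▸ hpos]
  · exact h
  · exfalso
    have hpos : 0 < Gw x m := Gw_pos_all hm0 hm1 hf h
    linarith [hx ▸ hpos]
end
end

section
/- Define G(x,m) := ∫₀ˣ (1 − 2m sin²θ)(1 − m sin²θ)^{−1/2} dθ for x ∈ ℝ and m ∈ (0,1). Then the equation G(x, m_T) = 0 has exactly three real solutions, namely x = 0 and x = ±(π − α(m_T)). -/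
open Real MeasureTheory Set

noncomputable section

namespace Stmt8Aux

variable {m : ℝ}

/-- the integrand -/
def g (m θ : ℝ) : ℝ := (1 - 2 * m * Real.sin θ ^ 2) / Real.sqrt (1 - m * Real.sin θ ^ 2)

lemma Gw_eq (x : ℝ) : Gw x m = ∫ θ in (0:ℝ)..x, g m θ := rfl

lemma hden (hm2 : m < 1) (hm0 : 0 < m) (θ : ℝ) : 0 < 1 - m * Real.sin θ ^ 2 := by
  nlinarith [Real.sin_sq_le_one θ, sq_nonneg (Real.sin θ)]

lemma hg_cont (hm2 : m < 1) (hm0 : 0 < m) : Continuous (g m) := by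
  apply Continuous.div
  · continuity
  · continuity
  · intro θ
    exact (Real.sqrt_pos.mpr (hden hm2 hm0 θ)).ne'

lemma hg_int (hm2 : m < 1) (hm0 : 0 < m) (a b : ℝ) :
    IntervalIntegrable (g m) volume a b :=
  (hg_cont hm2 hm0).intervalIntegrable a b

lemma g_even (θ : ℝ) : g m (-θ) = g m θ := by simp [g]

lemma g_per (θ : ℝ) : g m (θ + Real.pi) = g m θ := by simp [g]

lemma sin_alph_sq (hm1 : 1/2 < m) (hm2 : m < 1) :
    Real.sin (alph m) ^ 2 = 1 / (2 * m) := by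
  have h0 : (0:ℝ) < 1 / (2 * m) := by positivity
  have h1 : 1 / (2 * m) < 1 := by
    rw [div_lt_one (by linarith)]; linarith
  have hlt : Real.sqrt (1 / (2 * m)) < 1 := by
    have := Real.sqrt_lt_sqrt h0.le h1
    rwa [Real.sqrt_one] at this
  have hs : Real.sin (alph m) = Real.sqrt (1 / (2 * m)) := by
    apply Real.sin_arcsin
    · linarith [Real.sqrt_nonneg (1 / (2 * m))]
    · exact hlt.le
  rw [hs, Real.sq_sqrt h0.le]

lemma alph_pos (hm1 : 1/2 < m) (hm2 : m < 1) : 0 < alph m := by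
  apply Real.arcsin_pos.mpr
  positivity

lemma alph_lt (hm1 : 1/2 < m) (hm2 : m < 1) : alph m < Real.pi / 2 := by
  apply Real.arcsin_lt_pi_div_two.mpr
  have h1 : 1 / (2 * m) < 1 := by
    rw [div_lt_one (by linarith)]; linarith
  have := Real.sqrt_lt_sqrt (by positivity : (0:ℝ) ≤ 1 / (2*m)) h1
  rwa [Real.sqrt_one] at this

/-- sign of g from sin² comparison -/
lemma g_pos_of (hm1 : 1/2 < m) (hm2 : m < 1) {θ : ℝ}
    (h : Real.sin θ ^ 2 < 1 / (2 * m)) : 0 < g m θ := by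
  have hm0 : (0:ℝ) < m := by linarith
  apply div_pos
  · have : 2 * m * Real.sin θ ^ 2 < 2 * m * (1 / (2 * m)) := by
      apply mul_lt_mul_of_pos_left h (by linarith)
    rw [mul_one_div, div_self (by linarith : (2:ℝ)*m ≠ 0)] at this
    linarith
  · exact Real.sqrt_pos.mpr (hden hm2 hm0 θ)

lemma g_neg_of (hm1 : 1/2 < m) (hm2 : m < 1) {θ : ℝ}
    (h : 1 / (2 * m) < Real.sin θ ^ 2) : g m θ < 0 := by
  have hm0 : (0:ℝ) < m := by linarith
  apply div_neg_of_neg_of_pos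
  · have : 2 * m * (1 / (2 * m)) < 2 * m * Real.sin θ ^ 2 := by
      apply mul_lt_mul_of_pos_left h (by linarith)
    rw [mul_one_div, div_self (by linarith : (2:ℝ)*m ≠ 0)] at this
    linarith
  · exact Real.sqrt_pos.mpr (hden hm2 hm0 θ)

lemma sin_sq_lt (hm1 : 1/2 < m) (hm2 : m < 1) {θ : ℝ}
    (h1 : 0 ≤ θ) (h2 : θ < alph m) : Real.sin θ ^ 2 < 1 / (2 * m) := by
  rw [← sin_alph_sq hm1 hm2]
  have hs : Real.sin θ < Real.sin (alph m) :=
    Real.sin_lt_sin_of_lt_of_le_pi_div_two (by linarith [Real.pi_pos])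
      (le_of_lt (alph_lt hm1 hm2)) h2
  have hs0 : 0 ≤ Real.sin θ := Real.sin_nonneg_of_nonneg_of_le_pi h1
    (by linarith [alph_lt hm1 hm2, Real.pi_pos, Real.pi_gt_three])
  nlinarith

lemma sin_sq_gt (hm1 : 1/2 < m) (hm2 : m < 1) {θ : ℝ}
    (h1 : alph m < θ) (h2 : θ < Real.pi - alph m) :
    1 / (2 * m) < Real.sin θ ^ 2 := by
  rw [← sin_alph_sq hm1 hm2]
  have ha0 : 0 < alph m := alph_pos hm1 hm2
  have ha2 : alph m < Real.pi / 2 := alph_lt hm1 hm2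
  have hs0 : 0 ≤ Real.sin (alph m) := Real.sin_nonneg_of_nonneg_of_le_pi (le_of_lt ha0)
    (by linarith [Real.pi_pos])
  have hs : Real.sin (alph m) < Real.sin θ := by
    rcases le_or_gt θ (Real.pi / 2) with hc | hc
    · exact Real.sin_lt_sin_of_lt_of_le_pi_div_two (by linarith) hc h1
    · rw [← Real.sin_pi_sub θ]
      exact Real.sin_lt_sin_of_lt_of_le_pi_div_two (by linarith) (by linarith) (by linarith)
  nlinarith

lemma sin_sq_lt' (hm1 : 1/2 < m) (hm2 : m < 1) {θ : ℝ}
    (h1 : Real.pi - alph m < θ) (h2 : θ ≤ Real.pi) :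
    Real.sin θ ^ 2 < 1 / (2 * m) := by
  have := sin_sq_lt hm1 hm2 (θ := Real.pi - θ) (by linarith) (by linarith)
  rwa [Real.sin_pi_sub] at this

section mfixed
variable (hm1 : 1/2 < m) (hm2 : m < 1)
include hm1 hm2

/-- G is positive on `(0, α]` -/
lemma G_pos_1 {x : ℝ} (h1 : 0 < x) (h2 : x ≤ alph m) : 0 < Gw x m := by
  rw [Gw_eq]
  apply intervalIntegral.intervalIntegral_pos_of_pos_on (hg_int hm2 (by linarith) 0 x)
    _ h1
  intro θ hθ
  exact g_pos_of hm1 hm2 (sin_sq_lt hm1 hm2 (le_of_lt hθ.1) (lt_of_lt_of_le hθ.2 h2))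

/-- G is positive on `[α, π−α)`, given `G(π−α)=0` -/
lemma G_pos_2 (hz : Gw (Real.pi - alph m) m = 0) {x : ℝ}
    (h1 : alph m ≤ x) (h2 : x < Real.pi - alph m) : 0 < Gw x m := by
  have hsplit : Gw x m + (∫ θ in x..(Real.pi - alph m), g m θ) = Gw (Real.pi - alph m) m := by
    rw [Gw_eq, Gw_eq]
    exact intervalIntegral.integral_add_adjacent_intervals
      (hg_int hm2 (by linarith) 0 x) (hg_int hm2 (by linarith) x (Real.pi - alph m))
  have hneg : (∫ θ in x..(Real.pi - alph m), g m θ) < 0 := by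
    have : 0 < ∫ θ in x..(Real.pi - alph m), (-(g m θ)) := by
      apply intervalIntegral.intervalIntegral_pos_of_pos_on
        ((hg_int hm2 (by linarith) x _).neg) _ h2
      intro θ hθ
      simpa using g_neg_of hm1 hm2 (sin_sq_gt hm1 hm2 (lt_of_le_of_lt h1 hθ.1) hθ.2)
    rw [intervalIntegral.integral_neg] at this
    linarith
  rw [hz] at hsplit
  linarith

/-- G is positive on `(π−α, π]`, given `G(π−α)=0` -/
lemma G_pos_3 (hz : Gw (Real.pi - alph m) m = 0) {x : ℝ}
    (h1 : Real.pi - alph m < x) (h2 : x ≤ Real.pi) : 0 < Gw x m := by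
  have hsplit : Gw (Real.pi - alph m) m + (∫ θ in (Real.pi - alph m)..x, g m θ) = Gw x m := by
    rw [Gw_eq, Gw_eq]
    exact intervalIntegral.integral_add_adjacent_intervals
      (hg_int hm2 (by linarith) 0 _) (hg_int hm2 (by linarith) _ x)
  have hpos : 0 < ∫ θ in (Real.pi - alph m)..x, g m θ := by
    apply intervalIntegral.intervalIntegral_pos_of_pos_on
      (hg_int hm2 (by linarith) _ x) _ h1
    intro θ hθ
    exact g_pos_of hm1 hm2 (sin_sq_lt' hm1 hm2 hθ.1 (le_of_lt (lt_of_lt_of_le hθ.2 h2)))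
  rw [hz] at hsplit
  linarith

/-- G positive on `(0, π]` away from `π − α`. -/
lemma G_pos (hz : Gw (Real.pi - alph m) m = 0) {x : ℝ}
    (h1 : 0 < x) (h2 : x ≤ Real.pi) (h3 : x ≠ Real.pi - alph m) : 0 < Gw x m := by
  rcases le_or_gt x (alph m) with hc | hc
  · exact G_pos_1 hm1 hm2 h1 hc
  rcases lt_trichotomy x (Real.pi - alph m) with hc2 | hc2 | hc2
  · exact G_pos_2 hm1 hm2 hz (le_of_lt hc) hc2
  · exact absurd hc2 h3
  · exact G_pos_3 hm1 hm2 hz hc2 h2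

lemma G_nonneg (hz : Gw (Real.pi - alph m) m = 0) {x : ℝ}
    (h1 : 0 ≤ x) (h2 : x ≤ Real.pi) : 0 ≤ Gw x m := by
  rcases eq_or_lt_of_le h1 with rfl | h1'
  · simp [Gw]
  rcases eq_or_ne x (Real.pi - alph m) with rfl | h3
  · exact hz.ge
  · exact (G_pos hm1 hm2 hz h1' h2 h3).le

omit hm1 hm2 in
lemma G_shift (hm2 : m < 1) (hm0' : 0 < m) (x : ℝ) :
    Gw (x + Real.pi) m = Gw x m + Gw Real.pi m := by
  rw [Gw_eq, Gw_eq, Gw_eq]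
  have h1 : (∫ θ in (0:ℝ)..(x + Real.pi), g m θ)
      = (∫ θ in (0:ℝ)..Real.pi, g m θ) + ∫ θ in Real.pi..(x + Real.pi), g m θ :=
    (intervalIntegral.integral_add_adjacent_intervals
      (hg_int hm2 hm0' 0 Real.pi) (hg_int hm2 hm0' Real.pi (x + Real.pi))).symm
  have h2 : (∫ θ in Real.pi..(x + Real.pi), g m θ) = ∫ θ in (0:ℝ)..x, g m θ := by
    have := intervalIntegral.integral_comp_add_right (a := (0:ℝ)) (b := x)
      (fun θ => g m θ) Real.pi
    rw [zero_add] at this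
    rw [← this]
    congr 1
    ext θ
    exact g_per θ
  rw [h1, h2]; ring

omit hm1 hm2 in
lemma G_shift_n (hm2 : m < 1) (hm0' : 0 < m) (x : ℝ) (n : ℕ) :
    Gw (x + n * Real.pi) m = Gw x m + n * Gw Real.pi m := by
  induction n with
  | zero => simp
  | succ k ih =>
    have : x + (k + 1 : ℕ) * Real.pi = (x + k * Real.pi) + Real.pi := by
      push_cast; ring
    rw [this, G_shift hm2 hm0', ih]
    push_cast; ring

omit hm1 hm2 in
lemma G_odd (x : ℝ) : Gw (-x) m = - Gw x m := by
  rw [Gw_eq, Gw_eq]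
  have h := intervalIntegral.integral_comp_neg (a := (0:ℝ)) (b := x) (fun θ => g m θ)
  simp only [g_even, neg_zero] at h
  rw [h]
  exact intervalIntegral.integral_symm _ _

/-- Main positive-side uniqueness. -/
lemma G_zero_pos (hz : Gw (Real.pi - alph m) m = 0) {x : ℝ}
    (h1 : 0 < x) (h0 : Gw x m = 0) : x = Real.pi - alph m := by
  have hpi : 0 < Real.pi := Real.pi_pos
  have ha0 : 0 < alph m := alph_pos hm1 hm2
  have hGpi : 0 < Gw Real.pi m := G_pos hm1 hm2 hz hpi le_rfl (by linarith)
  set n : ℕ := ⌊x / Real.pi⌋₊ with hn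
  have hx1 : (n : ℝ) * Real.pi ≤ x := by
    have := Nat.floor_le (a := x / Real.pi) (by positivity)
    calc (n:ℝ) * Real.pi ≤ (x / Real.pi) * Real.pi := by
          apply mul_le_mul_of_nonneg_right this hpi.le
      _ = x := by field_simp
  have hx2 : x < (n + 1 : ℝ) * Real.pi := by
    have := Nat.lt_floor_add_one (x / Real.pi)
    calc x = (x / Real.pi) * Real.pi := by field_simp
      _ < (n + 1 : ℝ) * Real.pi := by
          apply mul_lt_mul_of_pos_right _ hpi
          exact_mod_cast this
  set y : ℝ := x - n * Real.pi with hy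
  have hxy : x = y + n * Real.pi := by ring
  have hGx : Gw x m = Gw y m + n * Gw Real.pi m := by
    rw [hxy]; exact G_shift_n hm2 (by linarith) y n
  rcases Nat.eq_zero_or_pos n with hn0 | hn1
  · -- n = 0 : x ∈ (0, π)
    have hxpi : x < Real.pi := by
      rw [hn0] at hx2; push_cast at hx2; linarith
    by_contra h3
    exact absurd h0 (G_pos hm1 hm2 hz h1 hxpi.le h3).ne'
  · -- n ≥ 1 : G x > 0, contradiction
    exfalso
    have hy0 : 0 ≤ y := by simp [hy]; linarith
    have hy1 : y ≤ Real.pi := by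
      simp only [hy]
      have : x < n * Real.pi + Real.pi := by push_cast at hx2; linarith
      linarith
    have hyn : 0 ≤ Gw y m := G_nonneg hm1 hm2 hz hy0 hy1
    have : (1:ℝ) ≤ (n:ℝ) := by exact_mod_cast hn1
    nlinarith [hGx, h0]

end mfixed

end Stmt8Aux

open Stmt8Aux in
/-- Lemma 2.9 (v): the equation `G(x, m_T) = 0` has exactly the three
solutions `x = 0` and `x = ±(π − α(m_T))`. -/
theorem stmt8 (mT : ℝ) (hmT : mT ∈ Set.Ioo (1/2 : ℝ) 1) (hmTzero : fT mT = 0) :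
    {x : ℝ | Gw x mT = 0} =
      {0, Real.pi - alph mT, -(Real.pi - alph mT)} := by
  obtain ⟨hm1, hm2⟩ := hmT
  have hz : Gw (Real.pi - alph mT) mT = 0 := hmTzero
  ext x
  simp only [Set.mem_setOf_eq, Set.mem_insert_iff, Set.mem_singleton_iff]
  constructor
  · intro h0
    rcases lt_trichotomy x 0 with hc | hc | hc
    · right; right
      have : Gw (-x) mT = 0 := by rw [G_odd, h0, neg_zero]
      have := G_zero_pos hm1 hm2 hz (by linarith) this
      linarith
    · left; exact hc
    · right; left; exact G_zero_pos hm1 hm2 hz hc h0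
  · rintro (rfl | rfl | rfl)
    · simp [Gw]
    · exact hz
    · rw [G_odd, hz, neg_zero]
end
end

section
/- For every m ∈ (0,1) one has 2E(m) + (m − 2)K(m) < 0, where K and E are the complete elliptic integrals of the first and second kind. -/
open Real MeasureTheory Set

noncomputable section

/-- Lemma 2.23: `2E(m) + (m − 2)K(m) < 0` for all `m ∈ (0,1)`. -/
theorem stmt14 (m : ℝ) (hm : m ∈ Set.Ioo (0:ℝ) 1) :
    2 * Ec m + (m - 2) * Kc m < 0 := by
  obtain ⟨hm0, hm1⟩ := hm
  have hpos : ∀ θ : ℝ, 0 < 1 - m * Real.sin θ ^ 2 := by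
    intro θ
    nlinarith [Real.sin_sq_le_one θ, sq_nonneg (Real.sin θ)]
  have hsq : ∀ θ : ℝ, 0 < Real.sqrt (1 - m * Real.sin θ ^ 2) :=
    fun θ => Real.sqrt_pos.mpr (hpos θ)
  have hcontD : Continuous fun θ : ℝ => Real.sqrt (1 - m * Real.sin θ ^ 2) :=
    (continuous_const.sub (continuous_const.mul (Real.continuous_sin.pow 2))).sqrt
  -- the folded integrand
  set g : ℝ → ℝ := fun θ => Real.cos (2 * θ) / Real.sqrt (1 - m * Real.sin θ ^ 2) with hg
  have hcontg : Continuous g := by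
    apply Continuous.div (Real.continuous_cos.comp (continuous_const.mul continuous_id)) hcontD
    exact fun θ => (hsq θ).ne'
  have hint1 : IntervalIntegrable (fun θ => Real.sqrt (1 - m * Real.sin θ ^ 2)) volume 0 (π/2) :=
    hcontD.intervalIntegrable _ _
  have hint2 : IntervalIntegrable (fun θ => 1 / Real.sqrt (1 - m * Real.sin θ ^ 2)) volume 0 (π/2) := by
    apply Continuous.intervalIntegrable
    exact continuous_const.div hcontD fun θ => (hsq θ).ne'
  -- Step 1: rewrite the LHS as m times an integral
  have key : 2 * Ec m + (m - 2) * Kc m = m * ∫ θ in (0:ℝ)..(π/2), g θ := by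
    rw [Ec, Eell, Kc, Fell, ← intervalIntegral.integral_const_mul,
      ← intervalIntegral.integral_const_mul, ← intervalIntegral.integral_const_mul,
      ← intervalIntegral.integral_add (hint1.const_mul 2) (hint2.const_mul (m - 2))]
    apply intervalIntegral.integral_congr
    intro θ _
    have hs := hpos θ
    have hsqne := (hsq θ).ne'
    have hcos : Real.cos (2 * θ) = 1 - 2 * Real.sin θ ^ 2 := by
      rw [Real.cos_two_mul]
      nlinarith [Real.sin_sq_add_cos_sq θ]
    have hss : Real.sqrt (1 - m * Real.sin θ ^ 2) ^ 2 = 1 - m * Real.sin θ ^ 2 :=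
      Real.sq_sqrt hs.le
    simp only [hg]
    field_simp
    nlinarith [hss]
  rw [key]
  apply mul_neg_of_pos_of_neg hm0
  -- Step 2: split the integral at π/4 and fold
  have hπ : (0:ℝ) < π := Real.pi_pos
  have hintg : ∀ a b : ℝ, IntervalIntegrable g volume a b := fun a b =>
    hcontg.intervalIntegrable a b
  have hsplit : (∫ θ in (0:ℝ)..(π/2), g θ) =
      (∫ θ in (0:ℝ)..(π/4), g θ) + ∫ θ in (π/4)..(π/2), g θ :=
    (intervalIntegral.integral_add_adjacent_intervals (hintg 0 (π/4)) (hintg (π/4) (π/2))).symm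
  have hfold : (∫ θ in (π/4)..(π/2), g θ) = ∫ θ in (0:ℝ)..(π/4), g (π/2 - θ) := by
    rw [intervalIntegral.integral_comp_sub_left g (π/2)]
    congr 1 <;> ring
  have hcomb : (∫ θ in (0:ℝ)..(π/4), g θ) + (∫ θ in (0:ℝ)..(π/4), g (π/2 - θ)) =
      ∫ θ in (0:ℝ)..(π/4), (g θ + g (π/2 - θ)) := by
    rw [intervalIntegral.integral_add (hintg 0 (π/4))]
    exact (hcontg.comp (continuous_const.sub continuous_id)).intervalIntegrable _ _
  rw [hsplit, hfold, hcomb]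
  -- Step 3: the folded integrand is negative on (0, π/4)
  have hneg : 0 < ∫ θ in (0:ℝ)..(π/4), -(g θ + g (π/2 - θ)) := by
    apply intervalIntegral.intervalIntegral_pos_of_pos_on
    · exact ((hcontg.add (hcontg.comp (continuous_const.sub continuous_id))).neg).intervalIntegrable _ _
    · intro θ hθ
      obtain ⟨h0, h4⟩ := hθ
      have h2θ : 0 < 2 * θ ∧ 2 * θ < π/2 := ⟨by linarith, by linarith⟩
      have hcospos : 0 < Real.cos (2 * θ) :=
        Real.cos_pos_of_mem_Ioo ⟨by linarith [h2θ.1], h2θ.2⟩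
      have hsin2 : Real.sin (π/2 - θ) = Real.cos θ := Real.sin_pi_div_two_sub θ
      have hcos2 : Real.cos (2 * (π/2 - θ)) = -Real.cos (2*θ) := by
        have : 2 * (π/2 - θ) = π - 2*θ := by ring
        rw [this, Real.cos_pi_sub]
      -- sin θ < cos θ on (0, π/4)
      have hsinlt : Real.sin θ ^ 2 < Real.cos θ ^ 2 := by
        have h1 : Real.sin θ < Real.cos θ := by
          rw [← Real.sin_pi_div_two_sub θ]
          apply Real.strictMonoOn_sin ⟨by linarith [Real.pi_pos], by linarith⟩
            ⟨by linarith, by linarith⟩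
          linarith
        have h2 : 0 ≤ Real.sin θ := Real.sin_nonneg_of_nonneg_of_le_pi h0.le (by linarith)
        nlinarith
      have hd1 : 0 < 1 - m * Real.sin θ ^ 2 := hpos θ
      have hd2 : 0 < 1 - m * Real.cos θ ^ 2 := by
        have := hpos (π/2 - θ); rwa [hsin2] at this
      have hlt : 1 - m * Real.cos θ ^ 2 < 1 - m * Real.sin θ ^ 2 := by nlinarith
      have hsqrtlt : Real.sqrt (1 - m * Real.cos θ ^ 2) < Real.sqrt (1 - m * Real.sin θ ^ 2) :=
        Real.sqrt_lt_sqrt hd2.le hlt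
      have hs1 : 0 < Real.sqrt (1 - m * Real.sin θ ^ 2) := hsq θ
      have hs2 : 0 < Real.sqrt (1 - m * Real.cos θ ^ 2) := Real.sqrt_pos.mpr hd2
      simp only [hg, hsin2, hcos2]
      rw [neg_div, ← sub_eq_add_neg, neg_pos, sub_neg]
      apply div_lt_div_of_pos_left hcospos hs2 hsqrtlt
    · linarith
  rw [intervalIntegral.integral_neg] at hneg
  linarith
end
end

section
/- One has f(2/3) = ∫₀^{2π/3} (1 − (4/3) sin²θ)(1 − (2/3) sin²θ)^{−1/2} dθ > 0, and consequently m_T > 2/3. -/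
open Real MeasureTheory Set

noncomputable section

/-- the integrand -/
def gg (m θ : ℝ) : ℝ := (1 - 2 * m * Real.sin θ ^ 2) / Real.sqrt (1 - m * Real.sin θ ^ 2)

lemma denom_pos {m : ℝ} (hm0 : 0 ≤ m) (hm1 : m < 1) (θ : ℝ) :
    0 < 1 - m * Real.sin θ ^ 2 := by
  nlinarith [Real.sin_sq_le_one θ, _root_.sq_nonneg (Real.sin θ)]

lemma gg_cont {m : ℝ} (hm0 : 0 ≤ m) (hm1 : m < 1) : Continuous (gg m) := by
  apply Continuous.div (by continuity) (by continuity)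
  intro θ
  exact ne_of_gt (Real.sqrt_pos.2 (denom_pos hm0 hm1 θ))

lemma gg_int {m : ℝ} (hm0 : 0 ≤ m) (hm1 : m < 1) (a b : ℝ) :
    IntervalIntegrable (gg m) volume a b :=
  (gg_cont hm0 hm1).intervalIntegrable a b

/-- `(2a-1)/√a` is monotone in `a` on positives. -/
lemma vmono {a b : ℝ} (ha : 0 < a) (hab : a ≤ b) :
    (2*a - 1) / Real.sqrt a ≤ (2*b - 1) / Real.sqrt b := by
  have hb : 0 < b := lt_of_lt_of_le ha hab
  have hsa : 0 < Real.sqrt a := Real.sqrt_pos.2 ha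
  have hsb : 0 < Real.sqrt b := Real.sqrt_pos.2 hb
  have h2 : Real.sqrt a ≤ Real.sqrt b := Real.sqrt_le_sqrt hab
  have ea : Real.sqrt a ^ 2 = a := Real.sq_sqrt ha.le
  have eb : Real.sqrt b ^ 2 = b := Real.sq_sqrt hb.le
  rw [div_le_div_iff₀ hsa hsb]
  nlinarith [mul_nonneg (mul_nonneg (sub_nonneg.2 h2) hsa.le) hsb.le]

lemma gg_eq (m θ : ℝ) :
    gg m θ = (2 * (1 - m * Real.sin θ ^ 2) - 1) / Real.sqrt (1 - m * Real.sin θ ^ 2) := by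
  unfold gg; ring_nf

/-- pointwise lower bound for `gg (2/3)` from a rational lower bound on the denominator. -/
lemma gg_lb {v0 c θ : ℝ} (hv0 : 0 < v0) (hc : c * Real.sqrt v0 ≤ 2 * v0 - 1)
    (hθ : v0 ≤ 1 - (2/3) * Real.sin θ ^ 2) : c ≤ gg (2/3) θ := by
  have h1 : c ≤ (2*v0 - 1) / Real.sqrt v0 :=
    (le_div_iff₀ (Real.sqrt_pos.2 hv0)).2 hc
  have h2 := vmono hv0 hθ
  rw [gg_eq]
  calc c ≤ (2*v0 - 1)/Real.sqrt v0 := h1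
    _ ≤ _ := h2

lemma sqrt_le_of {a b : ℝ} (hb : 0 ≤ b) (h : a ≤ b^2) : Real.sqrt a ≤ b := by
  calc Real.sqrt a ≤ Real.sqrt (b^2) := Real.sqrt_le_sqrt h
    _ = b := Real.sqrt_sq hb

lemma le_sqrt_of {a b : ℝ} (ha : 0 ≤ a) (h : a^2 ≤ b) : a ≤ Real.sqrt b := by
  calc a = Real.sqrt (a^2) := (Real.sqrt_sq ha).symm
    _ ≤ Real.sqrt b := Real.sqrt_le_sqrt h


/-- step bound: integral over `[a,b]` at least `c*(b-a)`. -/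
lemma step {a b c : ℝ} (hab : a ≤ b) (h : ∀ θ ∈ Set.Icc a b, c ≤ gg (2/3) θ) :
    c * (b - a) ≤ ∫ θ in a..b, gg (2/3) θ := by
  have := intervalIntegral.integral_mono_on (μ := volume) (f := fun _ => c)
    (g := gg (2/3)) hab (intervalIntegrable_const) (gg_int (by norm_num) (by norm_num) a b) h
  simpa [mul_comm] using this

lemma sin_sq_le {θ b : ℝ} (h0 : 0 ≤ θ) (hθb : θ ≤ b) (hb : b ≤ π/2) :
    Real.sin θ ^ 2 ≤ Real.sin b ^ 2 := by
  have h1 : Real.sin θ ≤ Real.sin b :=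
    Real.sin_le_sin_of_le_of_le_pi_div_two (by linarith [Real.pi_pos]) hb hθb
  have h2 : 0 ≤ Real.sin θ := Real.sin_nonneg_of_nonneg_of_le_pi h0 (by linarith [Real.pi_pos])
  nlinarith

/-- on `[π/2, π]` : reflection bound. -/
lemma sin_sq_le' {θ b : ℝ} (hθ : b ≤ θ) (hθ2 : θ ≤ π) (hb : π/2 ≤ b) :
    Real.sin θ ^ 2 ≤ Real.sin (π - b) ^ 2 := by
  have := sin_sq_le (θ := π - θ) (b := π - b) (by linarith) (by linarith) (by linarith)
  simpa [Real.sin_pi_sub] using this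

lemma sin_sq_5pi12 : Real.sin (5*π/12) ^ 2 = (2 + Real.sqrt 3)/4 := by
  rw [Real.sin_sq_eq_half_sub]
  rw [show 2*(5*π/12) = π - π/6 by ring, Real.cos_pi_sub, Real.cos_pi_div_six]
  ring

lemma sqrt3_lt : Real.sqrt 3 < 1.7321 := by
  nlinarith [sqrt_le_of (show (0:ℝ) ≤ 1.73205081 by norm_num) (show (3:ℝ) ≤ 1.73205081^2 by norm_num)]

set_option maxHeartbeats 1000000 in
lemma pos23 : 0 < ∫ θ in (0:ℝ)..(2*π/3), gg (2/3) θ := by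
  have ii : ∀ a b : ℝ, IntervalIntegrable (gg (2/3)) volume a b :=
    gg_int (by norm_num) (by norm_num)
  have pip : (0:ℝ) < π := Real.pi_pos
  have pilt : π < 3.1416 := by linarith [Real.pi_lt_d6]
  -- interval 1 : [0, π/12]
  have S1 : (0.93:ℝ) * (π/12 - 0) ≤ ∫ θ in (0:ℝ)..(π/12), gg (2/3) θ := by
    apply step (by linarith)
    rintro θ ⟨h0, h1⟩
    apply gg_lb (v0 := 0.9543) (by norm_num)
    · nlinarith [sqrt_le_of (show (0:ℝ) ≤ 0.97689 by norm_num)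
        (show (0.9543:ℝ) ≤ 0.97689^2 by norm_num), Real.sqrt_nonneg (0.9543:ℝ)]
    · have hs : Real.sin θ ≤ θ := Real.sin_le h0
      have hs0 : 0 ≤ Real.sin θ := Real.sin_nonneg_of_nonneg_of_le_pi h0 (by linarith)
      nlinarith
  -- interval 2 : [π/12, π/6]
  have S2 : (0.73:ℝ) * (π/6 - π/12) ≤ ∫ θ in (π/12)..(π/6), gg (2/3) θ := by
    apply step (by linarith)
    rintro θ ⟨h0, h1⟩
    apply gg_lb (v0 := 5/6) (by norm_num)
    · nlinarith [sqrt_le_of (show (0:ℝ) ≤ 0.9129 by norm_num)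
        (show (5/6:ℝ) ≤ 0.9129^2 by norm_num), Real.sqrt_nonneg (5/6:ℝ)]
    · have := sin_sq_le (b := π/6) (by linarith) h1 (by linarith)
      rw [Real.sin_pi_div_six] at this
      nlinarith
  -- interval 3 : [π/6, π/4]
  have S3 : (0.408:ℝ) * (π/4 - π/6) ≤ ∫ θ in (π/6)..(π/4), gg (2/3) θ := by
    apply step (by linarith)
    rintro θ ⟨h0, h1⟩
    apply gg_lb (v0 := 2/3) (by norm_num)
    · nlinarith [sqrt_le_of (show (0:ℝ) ≤ 0.8165 by norm_num)
        (show (2/3:ℝ) ≤ 0.8165^2 by norm_num), Real.sqrt_nonneg (2/3:ℝ)]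
    · have := sin_sq_le (b := π/4) (by linarith) h1 (by linarith)
      rw [Real.sin_pi_div_four] at this
      have h2 : Real.sqrt 2 ^ 2 = 2 := Real.sq_sqrt (by norm_num)
      nlinarith
  -- interval 4 : [π/4, π/3]
  have S4 : (0:ℝ) * (π/3 - π/4) ≤ ∫ θ in (π/4)..(π/3), gg (2/3) θ := by
    apply step (by linarith)
    rintro θ ⟨h0, h1⟩
    apply gg_lb (v0 := 1/2) (by norm_num)
    · simp [Real.sqrt_nonneg]
    · have := sin_sq_le (b := π/3) (by linarith) h1 (by linarith)
      rw [Real.sin_pi_div_three] at this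
      have h3 : Real.sqrt 3 ^ 2 = 3 := Real.sq_sqrt (by norm_num)
      nlinarith
  -- interval 5 : [π/3, 5π/12]
  have S5 : (-0.3973:ℝ) * (5*π/12 - π/3) ≤ ∫ θ in (π/3)..(5*π/12), gg (2/3) θ := by
    apply step (by linarith)
    rintro θ ⟨h0, h1⟩
    apply gg_lb (v0 := 0.3779) (by norm_num)
    · nlinarith [le_sqrt_of (show (0:ℝ) ≤ 0.6147 by norm_num)
        (show (0.6147:ℝ)^2 ≤ 0.3779 by norm_num), Real.sqrt_nonneg (0.3779:ℝ)]
    · have := sin_sq_le (b := 5*π/12) (by linarith) h1 (by linarith)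
      rw [sin_sq_5pi12] at this
      have := sqrt3_lt
      nlinarith
  -- interval 6 : [5π/12, π/2]
  have hc6 : (-0.5774:ℝ) * Real.sqrt (1/3) ≤ 2*(1/3) - 1 := by
    nlinarith [le_sqrt_of (show (0:ℝ) ≤ 0.57735 by norm_num)
      (show (0.57735:ℝ)^2 ≤ 1/3 by norm_num), Real.sqrt_nonneg (1/3:ℝ)]
  have S6 : (-0.5774:ℝ) * (π/2 - 5*π/12) ≤ ∫ θ in (5*π/12)..(π/2), gg (2/3) θ := by
    apply step (by linarith)
    rintro θ ⟨h0, h1⟩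
    apply gg_lb (v0 := 1/3) (by norm_num) hc6
    nlinarith [Real.sin_sq_le_one θ]
  -- interval 7 : [π/2, 7π/12]
  have S7 : (-0.5774:ℝ) * (7*π/12 - π/2) ≤ ∫ θ in (π/2)..(7*π/12), gg (2/3) θ := by
    apply step (by linarith)
    rintro θ ⟨h0, h1⟩
    apply gg_lb (v0 := 1/3) (by norm_num) hc6
    nlinarith [Real.sin_sq_le_one θ]
  -- interval 8 : [7π/12, 2π/3]
  have S8 : (-0.3973:ℝ) * (2*π/3 - 7*π/12) ≤ ∫ θ in (7*π/12)..(2*π/3), gg (2/3) θ := by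
    apply step (by linarith)
    rintro θ ⟨h0, h1⟩
    apply gg_lb (v0 := 0.3779) (by norm_num)
    · nlinarith [le_sqrt_of (show (0:ℝ) ≤ 0.6147 by norm_num)
        (show (0.6147:ℝ)^2 ≤ 0.3779 by norm_num), Real.sqrt_nonneg (0.3779:ℝ)]
    · have hb := sin_sq_le' (b := 7*π/12) h0 (by linarith) (by linarith)
      rw [show π - 7*π/12 = 5*π/12 by ring, sin_sq_5pi12] at hb
      have := sqrt3_lt
      nlinarith
  -- assemble
  have h1 := intervalIntegral.integral_add_adjacent_intervals (ii 0 (π/12)) (ii (π/12) (π/6))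
  have h2 := intervalIntegral.integral_add_adjacent_intervals (ii 0 (π/6)) (ii (π/6) (π/4))
  have h3 := intervalIntegral.integral_add_adjacent_intervals (ii 0 (π/4)) (ii (π/4) (π/3))
  have h4 := intervalIntegral.integral_add_adjacent_intervals (ii 0 (π/3)) (ii (π/3) (5*π/12))
  have h5 := intervalIntegral.integral_add_adjacent_intervals (ii 0 (5*π/12)) (ii (5*π/12) (π/2))
  have h6 := intervalIntegral.integral_add_adjacent_intervals (ii 0 (π/2)) (ii (π/2) (7*π/12))
  have h7 := intervalIntegral.integral_add_adjacent_intervals (ii 0 (7*π/12)) (ii (7*π/12) (2*π/3))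
  linarith [S1, S2, S3, S4, S5, S6, S7, S8, h1, h2, h3, h4, h5, h6, h7, pip]


lemma hsqrt34 : Real.sqrt (3/4) = Real.sqrt 3 / 2 := by
  rw [show (3:ℝ)/4 = (Real.sqrt 3/2)^2 by rw [div_pow, Real.sq_sqrt] <;> norm_num]
  exact Real.sqrt_sq (by positivity)

lemma harcsin : Real.arcsin (Real.sqrt 3/2) = π/3 := by
  rw [← Real.sin_pi_div_three, Real.arcsin_sin (by linarith [pi_pos]) (by linarith [pi_pos])]

lemma halph23 : alph (2/3) = π/3 := by
  unfold alph
  rw [show 1/(2*(2/3)) = (3:ℝ)/4 by norm_num, hsqrt34, harcsin]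

lemma hGg (x m : ℝ) : Gw x m = ∫ θ in (0:ℝ)..x, gg m θ := rfl

lemma hfT23 : fT (2/3) = ∫ θ in (0:ℝ)..(2*π/3), gg (2/3) θ := by
  unfold fT
  rw [halph23, show π - π/3 = 2*π/3 by ring, hGg]

/-- Lemma B.3: since `α(2/3) = π/3`, one has
`f(2/3) = ∫₀^{2π/3} (1 − (4/3) sin²θ)(1 − (2/3) sin²θ)^{−1/2} dθ > 0`, and consequently
`m_T > 2/3`. -/
theorem stmt18 (mT : ℝ) (hmT : mT ∈ Set.Ioo (1/2 : ℝ) 1) (hmTzero : fT mT = 0) :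
    fT (2/3) = (∫ θ in (0:ℝ)..(2 * Real.pi / 3),
        (1 - (4/3) * Real.sin θ ^ 2) / Real.sqrt (1 - (2/3) * Real.sin θ ^ 2)) ∧
    0 < fT (2/3) ∧
    2/3 < mT := by
  obtain ⟨hm1, hm2⟩ := hmT
  have hpos := pos23
  have heq : fT (2/3) = ∫ θ in (0:ℝ)..(2*π/3), gg (2/3) θ := hfT23
  refine ⟨?_, ?_, ?_⟩
  · rw [heq]
    apply intervalIntegral.integral_congr
    intro θ _
    unfold gg
    norm_num
  · rw [heq]; exact hpos
  · by_contra hle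
    push_neg at hle
    have hm0 : (0:ℝ) ≤ mT := by linarith
    set X := π - alph mT with hX
    have ha1 : alph mT ≤ π/2 := Real.arcsin_le_pi_div_two _
    have ha2 : π/3 ≤ alph mT := by
      have h34 : Real.sqrt 3/2 ≤ Real.sqrt (1/(2*mT)) := by
        rw [← hsqrt34]
        apply Real.sqrt_le_sqrt
        rw [le_div_iff₀ (by linarith : (0:ℝ) < 2*mT)]
        nlinarith
      calc π/3 = Real.arcsin (Real.sqrt 3/2) := harcsin.symm
        _ ≤ _ := Real.monotone_arcsin h34
    have hX1 : π/2 ≤ X := by simp only [hX]; linarith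
    have hX2 : X ≤ 2*π/3 := by simp only [hX]; linarith
    have pip := Real.pi_pos
    have ii : ∀ a b : ℝ, IntervalIntegrable (gg (2/3)) volume a b :=
      gg_int (by norm_num) (by norm_num)
    have hsplit := (intervalIntegral.integral_add_adjacent_intervals
      (ii 0 X) (ii X (2*π/3)))
    have htail : ∫ θ in X..(2*π/3), gg (2/3) θ ≤ 0 := by
      have hmono := intervalIntegral.integral_mono_on (μ := volume) (f := gg (2/3))
        (g := fun _ => (0:ℝ)) hX2 (ii _ _) intervalIntegrable_const ?_
      · simpa using hmono
      · rintro θ ⟨h0, h1⟩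
        have hsin : Real.sqrt 3/2 ≤ Real.sin θ := by
          rw [← Real.sin_pi_div_three, ← Real.sin_pi_sub θ]
          exact Real.sin_le_sin_of_le_of_le_pi_div_two (by linarith) (by linarith) (by linarith)
        have h3 : Real.sqrt 3 ^ 2 = 3 := Real.sq_sqrt (by norm_num)
        have hs3 : (0:ℝ) ≤ Real.sqrt 3 := Real.sqrt_nonneg 3
        have hnum : 1 - 2*(2/3)*Real.sin θ^2 ≤ 0 := by nlinarith
        exact div_nonpos_of_nonpos_of_nonneg hnum (Real.sqrt_nonneg _)
    have hcomp : ∫ θ in (0:ℝ)..X, gg (2/3) θ ≤ ∫ θ in (0:ℝ)..X, gg mT θ := by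
      apply intervalIntegral.integral_mono_on (by linarith) (ii _ _) (gg_int hm0 hm2 _ _)
      rintro θ ⟨h0, h1⟩
      rw [gg_eq, gg_eq]
      apply vmono
      · have := Real.sin_sq_le_one θ
        nlinarith
      · nlinarith [_root_.sq_nonneg (Real.sin θ)]
    have hfmT : fT mT = ∫ θ in (0:ℝ)..X, gg mT θ := rfl
    rw [hfmT] at hmTzero
    linarith
end
end
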